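/- arXiv:2005.09434 — 2 statements merged into one kernel-verified Lean document; each statement's English description precedes it below -/
import Mathlib

section
/- Let p be a prime and let n ≥ 1 be an integer with 2n < p - 5. Then the rational number p·(ℋ_{2(p-1)-2n} - ℋ_{p-1-2n}) is a p-adic integer and satisfies p·(ℋ_{2(p-1)-2n} - ℋ_{p-1-2n}) ≡ 1 + p/(2n+1) (mod p^2), where ℋ_m := Σ_{j=1}^m 1/j is the m-th harmonic number. -/
open Finset

noncomputable section

/-- Divided Bernoulli number `ℬ_n = B_n / n`. -/
def Bdiv (n : ℕ) : ℚ := bernoulli n / n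

/-- `padicCongr p m x y` means `x ≡ y (mod p^m)`: the `p`-adic valuation of `x - y`
is at least `m`, expressed via the `p`-adic norm. -/
def padicCongr (p : ℕ) [Fact p.Prime] (m : ℕ) (x y : ℚ) : Prop :=
  ‖((x - y : ℚ) : ℚ_[p])‖ ≤ (p : ℝ) ^ (-(m : ℤ))

open Classical in
/-- The coefficient `(x)_1` of `p` in the Hensel (`p`-adic) expansion of a rational `x`
which is a `p`-adic integer (junk value `0` if `x` is not a `p`-adic integer). -/
def hdigit1 (p : ℕ) [Fact p.Prime] (x : ℚ) : ℕ :=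
  if h : ‖(x : ℚ_[p])‖ ≤ 1 then PadicInt.appr (⟨(x : ℚ_[p]), h⟩ : ℤ_[p]) 2 / p else 0

/-- Unsigned Stirling number of the first kind `[n, k]`: the coefficient of `X^k` in
`X(X+1)⋯(X+n-1)`, i.e. the number of permutations of `n` letters with exactly `k` cycles. -/
def stirlingFirst (n k : ℕ) : ℕ := (ascPochhammer ℕ n).coeff k

/-- Multiple harmonic sum `𝒜★_k = ∑_{1 ≤ i₁ < ⋯ < i_k ≤ p-1} 1/(i₁⋯i_k)`. -/
def mhs (p k : ℕ) : ℚ :=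
  ∑ t ∈ (Finset.Icc 1 (p - 1)).powersetCard k, ∏ i ∈ t, (1 : ℚ) / i

/-- Wilson quotient `w_p = ((p-1)! + 1)/p`. -/
def wilsonQuotient (p : ℕ) : ℚ := ((Nat.factorial (p - 1) : ℚ) + 1) / p

/-- Generalized harmonic number `H_{p-1,k} = ∑_{a=1}^{p-1} 1/a^k`. -/
def Hgen (p k : ℕ) : ℚ := ∑ a ∈ Finset.Icc 1 (p - 1), (1 : ℚ) / (a : ℚ) ^ k

/-- Power sum `S_k = ∑_{a=1}^{p-1} a^k`. -/
def Spow (p k : ℕ) : ℚ := ∑ a ∈ Finset.Icc 1 (p - 1), (a : ℚ) ^ k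

/-- Harmonic number `ℋ_m = ∑_{j=1}^{m} 1/j`. -/
def harmonicQ (m : ℕ) : ℚ := ∑ j ∈ Finset.Icc 1 m, (1 : ℚ) / j

/-- `∑_{a=1}^{p-1} q_a^2 / a^2` where `q_a = (a^{p-1} - 1)/p` is the Fermat quotient. -/
def fermatQuotientSum (p : ℕ) : ℚ :=
  ∑ a ∈ Finset.Icc 1 (p - 1), (((a : ℚ) ^ (p - 1) - 1) / p) ^ 2 / (a : ℚ) ^ 2

/-!
Since `p · (1/p) = 1`, the claim is `A + B ≡ 1/(2n+1) (mod p)` for `A = ∑_{j=p-2n}^{p-1} 1/j` and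
`B = ∑_{j=p+1}^{2p-2-2n} 1/j`. Modulo `p` we have `1/(p+k) ≡ 1/k` and `1/(p-k) ≡ -1/k`. The
reflection `j ↦ p - j` then gives `ℋ_{p-1} ≡ -ℋ_{p-1} ≡ 0` (as `p` is odd) and `ℋ_{p-1-m} ≡ ℋ_m`,
so `A ≡ -ℋ_{2n}` and `B ≡ ℋ_{p-2-2n} ≡ ℋ_{2n+1}`, whence `A + B ≡ ℋ_{2n+1} - ℋ_{2n} = 1/(2n+1)`.
-/

namespace padicCongr

variable {p : ℕ} [Fact p.Prime] {m : ℕ} {x y z x' y' : ℚ}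

lemma refl (x : ℚ) : padicCongr p m x x := by
  rw [padicCongr, sub_self, Rat.cast_zero, norm_zero]
  positivity

lemma symm (h : padicCongr p m x y) : padicCongr p m y x := by
  rwa [padicCongr, ← neg_sub, Rat.cast_neg, norm_neg]

lemma add (h : padicCongr p m x y) (h' : padicCongr p m x' y') :
    padicCongr p m (x + x') (y + y') := by
  rw [padicCongr, add_sub_add_comm, Rat.cast_add]
  exact (IsUltrametricDist.norm_add_le_max _ _).trans (max_le h h')

lemma neg (h : padicCongr p m x y) : padicCongr p m (-x) (-y) := by
  rwa [padicCongr, neg_sub_neg, ← neg_sub, Rat.cast_neg, norm_neg]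

lemma sub (h : padicCongr p m x y) (h' : padicCongr p m x' y') :
    padicCongr p m (x - x') (y - y') := by
  simpa only [sub_eq_add_neg] using h.add h'.neg

lemma trans (h : padicCongr p m x y) (h' : padicCongr p m y z) : padicCongr p m x z := by
  rw [padicCongr, ← sub_add_sub_cancel x y z, Rat.cast_add]
  exact (IsUltrametricDist.norm_add_le_max _ _).trans (max_le h h')

lemma sum {ι : Type*} {s : Finset ι} {f g : ι → ℚ} (h : ∀ i ∈ s, padicCongr p m (f i) (g i)) :
    padicCongr p m (∑ i ∈ s, f i) (∑ i ∈ s, g i) := by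
  rw [padicCongr, ← sum_sub_distrib, Rat.cast_sum]
  exact IsUltrametricDist.norm_sum_le_of_forall_le_of_nonneg (by positivity) h

lemma natCast_prime_mul (h : padicCongr p m x y) : padicCongr p (m + 1) (p * x) (p * y) := by
  rw [padicCongr, ← mul_sub, Rat.cast_mul, norm_mul, Rat.cast_natCast, Padic.norm_p]
  calc (p : ℝ)⁻¹ * ‖((x - y : ℚ) : ℚ_[p])‖ ≤ (p : ℝ)⁻¹ * (p : ℝ) ^ (-(m : ℤ)) := by gcongr; exact h
    _ = (p : ℝ) ^ (-((m + 1 : ℕ) : ℤ)) := by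
      rw [Nat.cast_succ, neg_add, zpow_add₀ (by exact_mod_cast (Fact.out : p.Prime).ne_zero),
        zpow_neg_one, mul_comm]

lemma cancel_left_of_coprime {a : ℕ} (ha : p.Coprime a) (h : padicCongr p m (a * x) (a * y)) :
    padicCongr p m x y := by
  rwa [padicCongr, ← mul_sub, Rat.cast_mul, norm_mul, Rat.cast_natCast,
    Padic.norm_natCast_eq_one_iff.2 ha, one_mul] at h

lemma norm_le_one (h : padicCongr p m x y) (hy : ‖(y : ℚ_[p])‖ ≤ 1) : ‖(x : ℚ_[p])‖ ≤ 1 := by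
  have hpm : (p : ℝ) ^ (-(m : ℤ)) ≤ 1 :=
    zpow_le_one_of_nonpos₀ (by exact_mod_cast (Fact.out : p.Prime).one_le) (by omega)
  rw [← sub_add_cancel x y, Rat.cast_add]
  exact (IsUltrametricDist.norm_add_le_max _ _).trans (max_le (le_trans h hpm) hy)

end padicCongr

section

variable {p : ℕ} [Fact p.Prime]

lemma Padic.norm_intCast_eq_one_of_not_dvd {a : ℤ} (ha : ¬ (p : ℤ) ∣ a) : ‖(a : ℚ_[p])‖ = 1 :=
  (Padic.norm_int_le_one a).antisymm (not_lt.1 (Padic.norm_intCast_lt_one_iff.not.2 ha))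

lemma norm_one_add_prime_div_le_one {a : ℕ} (ha : p.Coprime a) :
    ‖((1 + p / a : ℚ) : ℚ_[p])‖ ≤ 1 := by
  rw [Rat.cast_add, Rat.cast_one, Rat.cast_div, Rat.cast_natCast, Rat.cast_natCast]
  refine (IsUltrametricDist.norm_add_le_max _ _).trans (max_le norm_one.le ?_)
  rw [norm_div, Padic.norm_natCast_eq_one_iff.2 ha, div_one, Padic.norm_p]
  exact inv_le_one_of_one_le₀ (by exact_mod_cast (Fact.out : p.Prime).one_le)

lemma padicCongr_one_div {a b : ℤ} (ha : ¬ (p : ℤ) ∣ a) (hab : (p : ℤ) ∣ b - a) :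
    padicCongr p 1 (1 / b) (1 / a) := by
  have hb : ¬ (p : ℤ) ∣ b := fun hb => ha ((dvd_sub_right hb).1 hab)
  have ha0 : (a : ℚ_[p]) ≠ 0 := by
    rw [← norm_ne_zero_iff, Padic.norm_intCast_eq_one_of_not_dvd ha]; exact one_ne_zero
  have hb0 : (b : ℚ_[p]) ≠ 0 := by
    rw [← norm_ne_zero_iff, Padic.norm_intCast_eq_one_of_not_dvd hb]; exact one_ne_zero
  have hdiff : ‖((a - b : ℤ) : ℚ_[p])‖ ≤ (p : ℝ) ^ (-((1 : ℕ) : ℤ)) :=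
    (Padic.norm_int_le_pow_iff_dvd _ 1).2 (by rw [pow_one, ← neg_sub]; exact hab.neg_right)
  rw [padicCongr]
  push_cast at hdiff ⊢
  rw [div_sub_div _ _ hb0 ha0, norm_div, norm_mul, Padic.norm_intCast_eq_one_of_not_dvd ha,
    Padic.norm_intCast_eq_one_of_not_dvd hb]
  simpa using hdiff

lemma harmonicQ_eq_sum_Ioc (m : ℕ) : harmonicQ m = ∑ j ∈ Ioc 0 m, (1 : ℚ) / j := by
  rw [harmonicQ, ← Finset.Icc_add_one_left_eq_Ioc, zero_add]

lemma harmonicQ_sub_harmonicQ {m k : ℕ} (h : m ≤ k) :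
    harmonicQ k - harmonicQ m = ∑ j ∈ Ioc m k, (1 : ℚ) / j := by
  rw [harmonicQ_eq_sum_Ioc, harmonicQ_eq_sum_Ioc, ← sum_Ioc_consecutive _ (Nat.zero_le m) h,
    add_sub_cancel_left]

lemma harmonicQ_succ (m : ℕ) : harmonicQ (m + 1) = harmonicQ m + 1 / (m + 1 : ℕ) := by
  rw [harmonicQ_eq_sum_Ioc, harmonicQ_eq_sum_Ioc, sum_Ioc_succ_top (Nat.zero_le m)]

-- Reflect `j ↦ p - j` and use `1 / (p - i) ≡ -1 / i (mod p)`.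
lemma sum_Ioc_one_div_padicCongr_neg_harmonicQ {m : ℕ} (hm : m < p) :
    padicCongr p 1 (∑ j ∈ Ioc m (p - 1), (1 : ℚ) / j) (-harmonicQ (p - 1 - m)) := by
  have hreflect : ∑ j ∈ Ioc m (p - 1), (1 : ℚ) / j
      = ∑ i ∈ Ioc 0 (p - 1 - m), (1 : ℚ) / ((p : ℤ) - i : ℤ) := by
    refine sum_nbij' (fun j => p - j) (fun i => p - i) ?_ ?_ ?_ ?_ ?_ <;>
      intro j hj <;> simp only [mem_Ioc] at hj
    all_goals first
      | (simp only [mem_Ioc]; omega)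
      | omega
      | (push_cast [Nat.cast_sub (show j ≤ p by omega)]; ring)
  rw [hreflect, harmonicQ_eq_sum_Ioc, ← sum_neg_distrib]
  refine padicCongr.sum fun i hi => ?_
  simp only [mem_Ioc] at hi
  have hi' : ¬ (p : ℤ) ∣ -(i : ℤ) := by
    rw [dvd_neg, Int.natCast_dvd_natCast]
    exact Nat.not_dvd_of_pos_of_lt hi.1 (by omega)
  simpa [neg_div] using padicCongr_one_div hi' (b := p - i) (by simp)

lemma sum_Ioc_one_div_padicCongr_harmonicQ {m : ℕ} (hm : m < p) :
    padicCongr p 1 (∑ j ∈ Ioc p (p + m), (1 : ℚ) / j) (harmonicQ m) := by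
  rw [harmonicQ_eq_sum_Ioc, show Ioc p (p + m) = (Ioc 0 m).map (addLeftEmbedding p) by simp,
    sum_map]
  refine padicCongr.sum fun i hi => ?_
  simp only [mem_Ioc] at hi
  have hi' : ¬ (p : ℤ) ∣ (i : ℤ) := by
    rw [Int.natCast_dvd_natCast]
    exact Nat.not_dvd_of_pos_of_lt hi.1 (by omega)
  simpa using padicCongr_one_div hi' (b := p + i) (by simp)

lemma harmonicQ_prime_sub_one_padicCongr_zero (hp : p ≠ 2) :
    padicCongr p 1 (harmonicQ (p - 1)) 0 := by
  have h := sum_Ioc_one_div_padicCongr_neg_harmonicQ (p := p) (m := 0) (Fact.out : p.Prime).pos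
  rw [← harmonicQ_eq_sum_Ioc, Nat.sub_zero] at h
  refine padicCongr.cancel_left_of_coprime ((Nat.coprime_primes Fact.out Nat.prime_two).2 hp) ?_
  simpa [two_mul] using h.add (padicCongr.refl (harmonicQ (p - 1)))

lemma harmonicQ_prime_sub_one_sub_padicCongr (hp : p ≠ 2) {m : ℕ} (hm : m < p) :
    padicCongr p 1 (harmonicQ (p - 1 - m)) (harmonicQ m) := by
  have h := (sum_Ioc_one_div_padicCongr_neg_harmonicQ hm).neg
  rw [← harmonicQ_sub_harmonicQ (by omega), neg_sub, neg_neg] at h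
  have h' := h.symm.trans ((padicCongr.refl _).sub (harmonicQ_prime_sub_one_padicCongr_zero hp))
  rwa [sub_zero] at h'

lemma harmonicQ_two_mul_sub_padicCongr (hp : p ≠ 2) {m : ℕ} (hm : m + 1 < p) :
    padicCongr p 1 (harmonicQ (2 * (p - 1) - m) - harmonicQ (p - 1 - m) - 1 / p)
      (1 / ((m : ℚ) + 1)) := by
  have hlow := sum_Ioc_one_div_padicCongr_neg_harmonicQ (p := p) (m := p - 1 - m) (by omega)
  rw [← harmonicQ_sub_harmonicQ (by omega), show p - 1 - (p - 1 - m) = m by omega] at hlow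
  have hhigh := (sum_Ioc_one_div_padicCongr_harmonicQ (p := p) (m := p - 2 - m) (by omega)).trans
    (by simpa only [show p - 1 - (m + 1) = p - 2 - m by omega] using
      harmonicQ_prime_sub_one_sub_padicCongr hp (m := m + 1) hm)
  rw [← harmonicQ_sub_harmonicQ (by omega)] at hhigh
  have hp1 := harmonicQ_succ (p - 1)
  rw [Nat.sub_add_cancel (Fact.out : p.Prime).one_le] at hp1
  convert hlow.add hhigh using 1
  · rw [show 2 * (p - 1) - m = p + (p - 2 - m) by omega, hp1]
    ring
  · rw [harmonicQ_succ]
    push_cast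
    ring

end

theorem statement18_general (p n : ℕ) [Fact p.Prime] (hn : 2 * n < p - 5) :
    ‖((((p : ℚ) * (harmonicQ (2 * (p - 1) - 2 * n) - harmonicQ (p - 1 - 2 * n))) : ℚ) : ℚ_[p])‖ ≤ 1 ∧
    padicCongr p 2 ((p : ℚ) * (harmonicQ (2 * (p - 1) - 2 * n) - harmonicQ (p - 1 - 2 * n)))
      (1 + (p : ℚ) / (2 * (n : ℚ) + 1)) := by
  have hp0 : (p : ℚ) ≠ 0 := by exact_mod_cast (Fact.out : p.Prime).ne_zero
  have hcongr := (padicCongr.refl 1).add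
    (harmonicQ_two_mul_sub_padicCongr (p := p) (m := 2 * n) (by omega) (by omega)).natCast_prime_mul
  rw [mul_sub, mul_one_div_cancel hp0, add_sub_cancel, mul_one_div] at hcongr
  push_cast at hcongr
  have hunit : p.Coprime (2 * n + 1) := Nat.coprime_of_lt_prime (by omega) (by omega) Fact.out
  refine ⟨hcongr.norm_le_one ?_, hcongr⟩
  simpa using norm_one_add_prime_div_le_one hunit

theorem statement18 (p n : ℕ) [Fact p.Prime] (hn1 : 1 ≤ n) (hn : 2 * n < p - 5) :
    ‖((((p : ℚ) * (harmonicQ (2 * (p - 1) - 2 * n) - harmonicQ (p - 1 - 2 * n))) : ℚ) : ℚ_[p])‖ ≤ 1 ∧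
    padicCongr p 2 ((p : ℚ) * (harmonicQ (2 * (p - 1) - 2 * n) - harmonicQ (p - 1 - 2 * n)))
      (1 + (p : ℚ) / (2 * (n : ℚ) + 1)) :=
  statement18_general p n hn
end
end

section
/- Let p be a prime with p ≥ 5 and let k be an integer with 1 ≤ k ≤ p - 1. Then the multiple harmonic sum 𝒜★_k satisfies 𝒜★_k ≡ ((-1)^{k-1}/k)·H_k (mod p^2), where H_k := Σ_{a=1}^{p-1} 1/a^k. -/
open Finset

noncomputable section

/-!
Let `e_j` and `p_j` be the elementary symmetric functions and power sums of the `p`-adic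
integers `1/1, …, 1/(p-1)`, so that `e_j = 𝒜★_j` and `p_j = H_j`. For `0 < j < p - 1`,
`p_j ≡ ∑_{x ∈ 𝔽_p^×} x^j = 0 (mod p)`, and Newton's identity `j e_j = ±∑_{i<j} ± e_i p_{j-i}`
then gives `e_j ≡ 0 (mod p)`. In Newton's identity for `k ≤ p - 1`,
`(-1)^(k+1) k e_k = p_k + ∑_{0<i<k} (-1)^i e_i p_{k-i}`, every cross term is therefore
divisible by `p²`, and `k` is a `p`-adic unit.
-/

open MvPolynomial

section NewtonModIdeal

variable {σ R : Type*} [CommRing R] [Fintype σ] (x : σ → R) {I : Ideal R}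

theorem aeval_esymm_mem_of_aeval_psum_mem {j : ℕ}
    (hpsum : ∀ i, 0 < i → i ≤ j → aeval x (psum σ R i) ∈ I) (hj : IsUnit (j : R)) :
    aeval x (esymm σ R j) ∈ I := by
  have hnewton := congrArg (aeval x) (mul_esymm_eq_sum σ R j)
  simp only [map_mul, map_natCast, map_sum, map_pow, map_neg, map_one] at hnewton
  rw [← I.unit_mul_mem_iff_mem hj, hnewton]
  refine I.mul_mem_left _ (I.sum_mem fun a ha ↦ I.mul_mem_left _ (hpsum _ ?_ ?_)) <;>
  · simp only [mem_filter, HasAntidiagonal.mem_antidiagonal] at ha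
    omega

theorem mul_aeval_esymm_sub_aeval_psum_mem_sq {k : ℕ} (hk : 0 < k)
    (hpsum : ∀ j, 0 < j → j < k → aeval x (psum σ R j) ∈ I)
    (hunit : ∀ j, 0 < j → j < k → IsUnit (j : R)) :
    (-1) ^ (k + 1) * k * aeval x (esymm σ R k) - aeval x (psum σ R k) ∈ I ^ 2 := by
  have hnewton := congrArg (aeval x) (psum_eq_mul_esymm_sub_sum σ R k hk)
  simp only [map_mul, map_natCast, map_sum, map_pow, map_neg, map_one, map_sub] at hnewton
  rw [hnewton, sub_sub_cancel, pow_two]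
  refine Ideal.sum_mem _ fun a ha ↦ ?_
  simp only [mem_filter, HasAntidiagonal.mem_antidiagonal, Set.mem_Ioo] at ha
  have hesymm := aeval_esymm_mem_of_aeval_psum_mem x (fun i hi0 hi ↦ hpsum i hi0 (by omega))
    (hunit a.1 ha.2.1 ha.2.2)
  exact Ideal.mul_mem_mul (I.mul_mem_left _ hesymm) (hpsum _ (by omega) (by omega))

end NewtonModIdeal

section Subtype

variable {ι R : Type*} [CommRing R] (s : Finset ι) (f : ι → R) (n : ℕ)

theorem aeval_esymm_subtype :
    aeval (fun i : s ↦ f i) (esymm s R n) = ∑ t ∈ s.powersetCard n, ∏ i ∈ t, f i := by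
  rw [aeval_esymm_eq_multiset_esymm, ← esymm_map_val, univ_eq_attach, attach_val,
    ← Function.comp_def f, ← Multiset.map_map f Subtype.val, Multiset.attach_map_val]

theorem aeval_psum_subtype : aeval (fun i : s ↦ f i) (psum s R n) = ∑ i ∈ s, f i ^ n := by
  simp only [psum, map_sum, map_pow, aeval_X]
  exact sum_coe_sort s (f · ^ n)

end Subtype

theorem ZMod.sum_Icc_inv_pow_eq_zero {p : ℕ} [Fact p.Prime] {j : ℕ} (hj0 : 0 < j)
    (hj : j < p - 1) : ∑ a ∈ Icc 1 (p - 1), ((a : ZMod p)⁻¹) ^ j = 0 :=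
  calc ∑ a ∈ Icc 1 (p - 1), ((a : ZMod p)⁻¹) ^ j
      = ∑ u : (ZMod p)ˣ, ((u⁻¹ : (ZMod p)ˣ) : ZMod p) ^ j :=
        sum_bij' (fun a ha ↦ Units.mk0 (a : ZMod p) (by
            rw [Ne, ZMod.natCast_eq_zero_iff]
            exact Nat.not_dvd_of_pos_of_lt (by grind) (by grind)))
          (fun u _ ↦ (u : ZMod p).val)
          (fun _ _ ↦ mem_univ _)
          (fun u _ ↦ by grind [u.ne_zero, ZMod.val_ne_zero, ZMod.val_lt])
          (fun a ha ↦ by simp [ZMod.val_cast_of_lt (show a < p by grind)])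
          (fun u _ ↦ Units.ext (ZMod.natCast_zmod_val _))
          (fun _ _ ↦ by simp)
    _ = ∑ u : (ZMod p)ˣ, (u : ZMod p) ^ j :=
      Equiv.sum_comp (Equiv.inv _) (fun u : (ZMod p)ˣ ↦ (u : ZMod p) ^ j)
    _ = 0 := by
      rw [FiniteField.sum_pow_units, ZMod.card, if_neg (Nat.not_dvd_of_pos_of_lt hj0 hj)]

namespace PadicInt

variable {p : ℕ} [Fact p.Prime] {a : ℕ}

theorem natCast_mul_inv (ha : p.Coprime a) : (a : ℤ_[p]) * (a : ℤ_[p]).inv = 1 :=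
  mul_inv (norm_natCast_eq_one_iff.mpr ha)

theorem coe_inv_natCast (ha : p.Coprime a) :
    (((a : ℤ_[p]).inv : ℤ_[p]) : ℚ_[p]) = (a : ℚ_[p])⁻¹ :=
  eq_inv_of_mul_eq_one_right (by rw [← coe_natCast, ← coe_mul, natCast_mul_inv ha, coe_one])

theorem toZMod_inv_natCast (ha : p.Coprime a) : toZMod (a : ℤ_[p]).inv = (a : ZMod p)⁻¹ :=
  eq_inv_of_mul_eq_one_right (by rw [← map_natCast toZMod, ← map_mul, natCast_mul_inv ha, map_one])

end PadicInt

section Reciprocals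

variable (p : ℕ) [Fact p.Prime]

def reciprocals : Icc 1 (p - 1) → ℤ_[p] := fun a ↦ ((a : ℕ) : ℤ_[p]).inv

variable {p}

theorem coprime_of_mem_Icc {a : ℕ} (ha : a ∈ Icc 1 (p - 1)) : p.Coprime a :=
  Nat.coprime_of_lt_prime (by grind) (by grind [(Fact.out : p.Prime).pos]) Fact.out

theorem coe_aeval_esymm_reciprocals (k : ℕ) :
    (aeval (reciprocals p) (esymm _ ℤ_[p] k) : ℚ_[p]) = mhs p k := by
  unfold reciprocals
  rw [aeval_esymm_subtype _ (fun a : ℕ ↦ (a : ℤ_[p]).inv), mhs, PadicInt.coe_sum, Rat.cast_sum]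
  refine sum_congr rfl fun t ht ↦ ?_
  rw [Rat.cast_prod]
  refine (map_prod PadicInt.Coe.ringHom _ _).trans (prod_congr rfl fun a ha ↦ ?_)
  exact (PadicInt.coe_inv_natCast (coprime_of_mem_Icc ((mem_powersetCard.mp ht).1 ha))).trans
    (by simp)

theorem coe_aeval_psum_reciprocals (k : ℕ) :
    (aeval (reciprocals p) (psum _ ℤ_[p] k) : ℚ_[p]) = Hgen p k := by
  unfold reciprocals
  rw [aeval_psum_subtype _ (fun a : ℕ ↦ (a : ℤ_[p]).inv), Hgen, PadicInt.coe_sum, Rat.cast_sum]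
  refine sum_congr rfl fun a ha ↦ ?_
  rw [PadicInt.coe_pow, PadicInt.coe_inv_natCast (coprime_of_mem_Icc ha)]
  simp

theorem aeval_psum_reciprocals_mem_span {j : ℕ} (hj0 : 0 < j) (hj : j < p - 1) :
    aeval (reciprocals p) (psum _ ℤ_[p] j) ∈ Ideal.span {(p : ℤ_[p])} := by
  rw [← PadicInt.maximalIdeal_eq_span_p, ← PadicInt.ker_toZMod, RingHom.mem_ker]
  unfold reciprocals
  rw [aeval_psum_subtype _ (fun a : ℕ ↦ (a : ℤ_[p]).inv), map_sum]
  simp only [map_pow]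
  rw [sum_congr rfl fun a ha ↦ by rw [PadicInt.toZMod_inv_natCast (coprime_of_mem_Icc ha)]]
  exact ZMod.sum_Icc_inv_pow_eq_zero hj0 hj

end Reciprocals

theorem statement19_general (p k : ℕ) [Fact p.Prime] (hk1 : 1 ≤ k) (hk : k ≤ p - 1) :
    padicCongr p 2 (mhs p k) ((-1) ^ (k - 1) / (k : ℚ) * Hgen p k) := by
  have hp : p.Prime := Fact.out
  have hnewton : ‖(-1) ^ (k + 1) * k * aeval (reciprocals p) (esymm _ ℤ_[p] k)
      - aeval (reciprocals p) (psum _ ℤ_[p] k)‖ ≤ (p : ℝ) ^ (-(2 : ℕ) : ℤ) := by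
    rw [PadicInt.norm_le_pow_iff_mem_span_pow, ← Ideal.span_singleton_pow]
    refine mul_aeval_esymm_sub_aeval_psum_mem_sq _ hk1
      (fun j hj0 hj ↦ aeval_psum_reciprocals_mem_span hj0 (by omega))
      (fun j hj0 hj ↦ PadicInt.isUnit_iff.mpr (PadicInt.norm_natCast_eq_one_iff.mpr
        (Nat.coprime_of_lt_prime hj0.ne' (by omega) hp)))
  have hk_norm : ‖(k : ℚ_[p])‖ = 1 :=
    Padic.norm_natCast_eq_one_iff.mpr (Nat.coprime_of_lt_prime (by omega) (by omega) hp)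
  have hsign : ((-1 : ℚ_[p])) ^ (k + 1) * (-1) ^ (k - 1) = 1 := by
    rw [← pow_add, Even.neg_one_pow ⟨k, by omega⟩]
  have hk0 : (k : ℚ_[p]) ≠ 0 := by exact_mod_cast (show k ≠ 0 by omega)
  rw [PadicInt.norm_def] at hnewton
  push_cast [coe_aeval_esymm_reciprocals, coe_aeval_psum_reciprocals] at hnewton
  have hscaled : (-1) ^ (k + 1) * (k : ℚ_[p]) *
      ((mhs p k : ℚ_[p]) - (-1) ^ (k - 1) / k * Hgen p k) =
      (-1) ^ (k + 1) * k * mhs p k - Hgen p k := by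
    field_simp
    linear_combination (-Hgen p k : ℚ_[p]) * hsign
  rw [padicCongr]
  push_cast
  calc _ = ‖(-1) ^ (k + 1) * (k : ℚ_[p]) *
          ((mhs p k : ℚ_[p]) - (-1) ^ (k - 1) / k * Hgen p k)‖ := by
        rw [norm_mul, norm_mul, norm_pow, norm_neg, norm_one, one_pow, one_mul, hk_norm, one_mul]
    _ ≤ _ := hscaled ▸ hnewton

theorem statement19 (p k : ℕ) [Fact p.Prime] (hp : 5 ≤ p) (hk1 : 1 ≤ k) (hk : k ≤ p - 1) :
    padicCongr p 2 (mhs p k) ((-1) ^ (k - 1) / (k : ℚ) * Hgen p k) :=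
  statement19_general p k hk1 hk
end
end
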